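/- Fix a prime p and an abelian group A. Let μ be a p-invariant A-valued distribution on X. Then for every ℤ_p-lattice Λ in ℚ_p², with Λ' := Λ \ p·Λ its set of primitive vectors, one has μ(Λ') = μ(X₀). -/

import Mathlib

/-- `X := (ℚ_p × ℚ_p) \ {(0,0)}`. -/
def X (p : ℕ) [Fact p.Prime] : Set (ℚ_[p] × ℚ_[p]) := {v | v ≠ 0}

/-- The set `X₀` of primitive vectors of `ℤ_p²`. -/
def X0 (p : ℕ) [Fact p.Prime] : Set (ℚ_[p] × ℚ_[p]) :=
  {v | ‖v.1‖ ≤ 1 ∧ ‖v.2‖ ≤ 1 ∧ (‖v.1‖ = 1 ∨ ‖v.2‖ = 1)}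

/-- `p^j·U := {(p^j x, p^j y) : (x, y) ∈ U}`. -/
def pScale (p : ℕ) [Fact p.Prime] (j : ℤ) (U : Set (ℚ_[p] × ℚ_[p])) : Set (ℚ_[p] × ℚ_[p]) :=
  (fun v => ((p : ℚ_[p]) ^ j * v.1, (p : ℚ_[p]) ^ j * v.2)) '' U

/-- A compact open subset of `X`: compact and open in `ℚ_p × ℚ_p` and contained in `X`. -/
def IsCompactOpen (p : ℕ) [Fact p.Prime] (U : Set (ℚ_[p] × ℚ_[p])) : Prop :=
  IsCompact U ∧ IsOpen U ∧ U ⊆ X p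

/-- An `A`-valued distribution on `X`: additive on disjoint compact open subsets of `X`. -/
def IsDistribution (p : ℕ) [Fact p.Prime] {A : Type*} [AddCommGroup A]
    (μ : Set (ℚ_[p] × ℚ_[p]) → A) : Prop :=
  ∀ U V, IsCompactOpen p U → IsCompactOpen p V → Disjoint U V → μ (U ∪ V) = μ U + μ V

/-- `μ` is `p`-invariant: `μ(p·U) = μ(U)` for every compact open `U ⊆ X`. -/
def IsPInvariant (p : ℕ) [Fact p.Prime] {A : Type*} [AddCommGroup A]
    (μ : Set (ℚ_[p] × ℚ_[p]) → A) : Prop :=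
  ∀ U, IsCompactOpen p U → μ (pScale p 1 U) = μ U

/-- A `ℤ_p`-lattice in `ℚ_p²`. -/
def IsLattice (p : ℕ) [Fact p.Prime] (Λ : Set (ℚ_[p] × ℚ_[p])) : Prop :=
  ∃ b : Module.Basis (Fin 2) ℚ_[p] (ℚ_[p] × ℚ_[p]),
    Λ = {z | ∃ a c : ℚ_[p], ‖a‖ ≤ 1 ∧ ‖c‖ ≤ 1 ∧ z = a • b 0 + c • b 1}

/-!
Write `Λ = e⁻¹(ℤ_p²)` for a linear automorphism `e` of `ℚ_p²`; then `Λ \ pΛ = e⁻¹(X₀)`, and `X₀` is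
the unit sphere of the sup norm. Since norms of nonzero vectors are powers of `p` and `e` commutes
with scaling, both `X₀` and `e⁻¹(X₀)` are compact open fundamental domains for the action of `p^ℤ`
on `X`. For two such domains `S`, `T`, compactness makes `T = ⋃ⱼ (pʲS ∩ T)` a finite disjoint union,
so by `p`-invariance `μ(T) = Σⱼ μ(pʲS ∩ T) = Σⱼ μ(S ∩ p⁻ʲT) = μ(S)`.
-/

open Set Metric Function
open scoped Pointwise

instance Prod.instIsUltrametricDist {E F : Type*} [PseudoMetricSpace E] [PseudoMetricSpace F]
    [IsUltrametricDist E] [IsUltrametricDist F] : IsUltrametricDist (E × F) := by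
  constructor
  intro x y z
  simp only [Prod.dist_eq]
  refine max_le ((IsUltrametricDist.dist_triangle_max _ y.1 _).trans ?_)
    ((IsUltrametricDist.dist_triangle_max _ y.2 _).trans ?_) <;>
  exact max_le_max (by simp) (by simp)

section Scaling

variable {p : ℕ} [Fact p.Prime]

lemma pScale_eq_smul (j : ℤ) (U : Set (ℚ_[p] × ℚ_[p])) :
    pScale p j U = ((p : ℚ_[p]) ^ j) • U := rfl

lemma natCast_zpow_ne_zero (j : ℤ) : (p : ℚ_[p]) ^ j ≠ 0 :=
  zpow_ne_zero j (Nat.cast_ne_zero.2 (Fact.out : p.Prime).ne_zero)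

lemma pScale_pScale (j k : ℤ) (U : Set (ℚ_[p] × ℚ_[p])) :
    pScale p j (pScale p k U) = pScale p (j + k) U := by
  rw [pScale_eq_smul, pScale_eq_smul, pScale_eq_smul, smul_smul,
    zpow_add₀ (Nat.cast_ne_zero.2 (Fact.out : p.Prime).ne_zero)]

lemma pScale_zero (U : Set (ℚ_[p] × ℚ_[p])) : pScale p 0 U = U := by
  simp [pScale_eq_smul]

lemma pScale_inter (j : ℤ) (U V : Set (ℚ_[p] × ℚ_[p])) :
    pScale p j (U ∩ V) = pScale p j U ∩ pScale p j V :=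
  smul_set_inter₀ (natCast_zpow_ne_zero (p := p) j)

lemma preimage_pScale (e : (ℚ_[p] × ℚ_[p]) ≃ₗ[ℚ_[p]] ℚ_[p] × ℚ_[p]) (j : ℤ)
    (U : Set (ℚ_[p] × ℚ_[p])) : e ⁻¹' pScale p j U = pScale p j (e ⁻¹' U) :=
  (natCast_zpow_ne_zero j).isUnit.preimage_smul_set e U

lemma pScale_sphere_zero (j : ℤ) (r : ℝ) :
    pScale p j (sphere 0 r) = sphere 0 ((p : ℝ) ^ (-j) * r) := by
  rw [pScale_eq_smul, smul_sphere' (natCast_zpow_ne_zero j), smul_zero, Padic.norm_p_zpow]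

lemma pScale_closedBall_zero (j : ℤ) (r : ℝ) :
    pScale p j (closedBall 0 r) = closedBall 0 ((p : ℝ) ^ (-j) * r) := by
  rw [pScale_eq_smul, smul_closedBall' (natCast_zpow_ne_zero j), smul_zero, Padic.norm_p_zpow]

end Scaling

section Norm

variable {p : ℕ} [Fact p.Prime]

lemma exists_norm_eq_zpow {v : ℚ_[p] × ℚ_[p]} (hv : v ≠ 0) :
    ∃ j : ℤ, ‖v‖ = (p : ℝ) ^ (-j) := by
  have hv' : ‖v‖ ≠ 0 := norm_ne_zero_iff.2 hv
  rw [Prod.norm_def] at hv' ⊢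
  rcases max_choice ‖v.1‖ ‖v.2‖ with h | h <;> rw [h] at hv' ⊢ <;>
    exact ⟨_, Padic.norm_eq_zpow_neg_valuation (norm_ne_zero_iff.1 hv')⟩

lemma one_lt_natCast_prime : (1 : ℝ) < p := by
  exact_mod_cast (Fact.out : p.Prime).one_lt

lemma X0_eq_sphere : X0 p = sphere 0 1 := by
  ext v
  simp only [X0, mem_ofPred_eq, mem_sphere_zero_iff_norm, Prod.norm_def, max_eq_iff]
  grind

lemma closedBall_diff_pScale_one :
    closedBall (0 : ℚ_[p] × ℚ_[p]) 1 \ pScale p 1 (closedBall 0 1) = sphere 0 1 := by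
  ext v
  rw [pScale_closedBall_zero, mul_one, mem_sdiff, mem_closedBall_zero_iff,
    mem_closedBall_zero_iff, mem_sphere_zero_iff_norm]
  constructor
  · rintro ⟨h1, hp⟩
    have hv : v ≠ 0 := by rintro rfl; exact hp (by rw [norm_zero]; positivity)
    obtain ⟨j, hj⟩ := exists_norm_eq_zpow hv
    rw [hj] at h1 hp ⊢
    rw [← zpow_zero (p : ℝ), zpow_le_zpow_iff_right₀ one_lt_natCast_prime] at h1
    rw [zpow_le_zpow_iff_right₀ one_lt_natCast_prime] at hp
    rw [show j = 0 by omega, neg_zero, zpow_zero]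
  · intro h
    rw [h]
    refine ⟨le_rfl, fun h1 => ?_⟩
    rw [← zpow_zero (p : ℝ), zpow_le_zpow_iff_right₀ one_lt_natCast_prime] at h1
    omega

end Norm

section CompactOpen

variable {p : ℕ} [Fact p.Prime]

lemma IsCompactOpen.pScale {U : Set (ℚ_[p] × ℚ_[p])} (hU : IsCompactOpen p U) (j : ℤ) :
    IsCompactOpen p (pScale p j U) := by
  obtain ⟨hc, ho, hX⟩ := hU
  rw [pScale_eq_smul]
  refine ⟨hc.smul _, ho.smul₀ (natCast_zpow_ne_zero j), ?_⟩
  rintro _ ⟨v, hv, rfl⟩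
  exact smul_ne_zero (natCast_zpow_ne_zero j) (hX hv)

lemma IsCompactOpen.inter {U V : Set (ℚ_[p] × ℚ_[p])} (hU : IsCompactOpen p U)
    (hV : IsCompactOpen p V) : IsCompactOpen p (U ∩ V) :=
  ⟨hU.1.inter_right hV.1.isClosed, hU.2.1.inter hV.2.1, inter_subset_left.trans hU.2.2⟩

lemma IsCompactOpen.biUnion {ι : Type*} (s : Finset ι) {U : ι → Set (ℚ_[p] × ℚ_[p])}
    (hU : ∀ i, IsCompactOpen p (U i)) : IsCompactOpen p (⋃ i ∈ s, U i) :=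
  ⟨s.isCompact_biUnion fun i _ => (hU i).1, isOpen_biUnion fun i _ => (hU i).2.1,
    iUnion₂_subset fun i _ => (hU i).2.2⟩

lemma IsCompactOpen.preimage_linearEquiv {U : Set (ℚ_[p] × ℚ_[p])} (hU : IsCompactOpen p U)
    (e : (ℚ_[p] × ℚ_[p]) ≃ₗ[ℚ_[p]] ℚ_[p] × ℚ_[p]) : IsCompactOpen p (e ⁻¹' U) := by
  obtain ⟨hc, ho, hX⟩ := hU
  refine ⟨?_, ho.preimage e.toLinearMap.continuous_of_finiteDimensional, ?_⟩
  · rw [← e.image_symm_eq_preimage]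
    exact hc.image e.symm.toLinearMap.continuous_of_finiteDimensional
  · intro v hv
    exact (map_ne_zero_iff e e.injective).1 (hX hv)

end CompactOpen

def IsPScaleFundamentalDomain (p : ℕ) [Fact p.Prime] (S : Set (ℚ_[p] × ℚ_[p])) : Prop :=
  IsCompactOpen p S ∧ ∀ v ∈ X p, ∃! j : ℤ, v ∈ pScale p j S

section FundamentalDomain

variable {p : ℕ} [Fact p.Prime]

lemma isPScaleFundamentalDomain_sphere :
    IsPScaleFundamentalDomain p (sphere (0 : ℚ_[p] × ℚ_[p]) 1) := by
  refine ⟨⟨isCompact_sphere 0 1, IsUltrametricDist.isOpen_sphere 0 one_ne_zero,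
    fun v hv => ne_zero_of_mem_sphere one_ne_zero ⟨v, hv⟩⟩, fun v hv => ?_⟩
  simp only [pScale_sphere_zero, mul_one, mem_sphere_zero_iff_norm]
  obtain ⟨j, hj⟩ := exists_norm_eq_zpow (show v ≠ 0 from hv)
  refine ⟨j, hj, fun k hk => ?_⟩
  have := zpow_right_injective₀ (zero_lt_one.trans one_lt_natCast_prime)
    one_lt_natCast_prime.ne' (hk.symm.trans hj)
  omega

lemma IsPScaleFundamentalDomain.preimage_linearEquiv {S : Set (ℚ_[p] × ℚ_[p])}
    (hS : IsPScaleFundamentalDomain p S) (e : (ℚ_[p] × ℚ_[p]) ≃ₗ[ℚ_[p]] ℚ_[p] × ℚ_[p]) :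
    IsPScaleFundamentalDomain p (e ⁻¹' S) := by
  refine ⟨hS.1.preimage_linearEquiv e, fun v hv => ?_⟩
  simp only [← preimage_pScale, mem_preimage]
  exact hS.2 (e v) ((map_ne_zero_iff e e.injective).2 hv)

lemma IsPScaleFundamentalDomain.pairwise_disjoint {S : Set (ℚ_[p] × ℚ_[p])}
    (hS : IsPScaleFundamentalDomain p S) : Pairwise (Disjoint on fun j => pScale p j S) :=
  fun j _ hjk => disjoint_left.2 fun v hjv hkv =>
    hjk ((hS.2 v ((hS.1.pScale j).2.2 hjv)).unique hjv hkv)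

end FundamentalDomain

section Distribution

variable {p : ℕ} [Fact p.Prime] {A : Type*} [AddCommGroup A] {μ : Set (ℚ_[p] × ℚ_[p]) → A}

lemma IsDistribution.empty (hμ : IsDistribution p μ) : μ ∅ = 0 := by
  have hco : IsCompactOpen p ∅ := ⟨isCompact_empty, isOpen_empty, empty_subset _⟩
  simpa using hμ ∅ ∅ hco hco (disjoint_empty _)

lemma IsDistribution.biUnion_finset (hμ : IsDistribution p μ) {ι : Type*} (s : Finset ι)
    {U : ι → Set (ℚ_[p] × ℚ_[p])} (hU : ∀ i, IsCompactOpen p (U i))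
    (hdisj : Pairwise (Disjoint on U)) : μ (⋃ i ∈ s, U i) = ∑ i ∈ s, μ (U i) := by
  classical
  induction s using Finset.induction_on with
  | empty => simpa using hμ.empty
  | insert i s hi ih =>
    rw [Finset.set_biUnion_insert, Finset.sum_insert hi, ← ih,
      hμ _ _ (hU i) (IsCompactOpen.biUnion s hU)
        (disjoint_iUnion₂_right.2 fun k hk => hdisj (ne_of_mem_of_not_mem hk hi).symm)]

lemma IsPInvariant.apply_pScale (hinv : IsPInvariant p μ) (j : ℤ) {U : Set (ℚ_[p] × ℚ_[p])}
    (hU : IsCompactOpen p U) : μ (pScale p j U) = μ U := by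
  induction j using Int.induction_on with
  | zero => rw [pScale_zero]
  | succ k ih => rw [add_comm, ← pScale_pScale, hinv _ (hU.pScale k), ih]
  | pred k ih =>
    rw [← ih, ← hinv _ (hU.pScale _), pScale_pScale]
    ring_nf

lemma IsDistribution.eq_finsum_inter_pScale (hμ : IsDistribution p μ)
    {S T : Set (ℚ_[p] × ℚ_[p])} (hS : IsPScaleFundamentalDomain p S)
    (hT : IsCompactOpen p T) : μ T = ∑ᶠ j : ℤ, μ (pScale p j S ∩ T) := by
  obtain ⟨t, ht⟩ := hT.1.elim_finite_subcover (fun j : ℤ => pScale p j S)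
    (fun j => (hS.1.pScale j).2.1) fun v hv => mem_iUnion.2 (hS.2 v (hT.2.2 hv)).exists
  have hmem : ∀ j, ∀ v ∈ pScale p j S ∩ T, j ∈ t := by
    rintro j v ⟨hjv, hv⟩
    obtain ⟨_, hk, hkv⟩ := mem_iUnion₂.1 (ht hv)
    rwa [(hS.2 v (hT.2.2 hv)).unique hjv hkv]
  have hsupp : support (fun j => μ (pScale p j S ∩ T)) ⊆ t := by
    intro j hj
    by_contra hjt
    exact hj (show μ (pScale p j S ∩ T) = 0 by
      rw [eq_empty_of_forall_notMem fun v hv => hjt (hmem j v hv), hμ.empty])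
  have hT_eq : T = ⋃ j ∈ t, pScale p j S ∩ T := by
    refine Subset.antisymm (fun v hv => ?_) (iUnion₂_subset fun j _ => inter_subset_right)
    obtain ⟨j, hj, -⟩ := hS.2 v (hT.2.2 hv)
    exact mem_iUnion₂.2 ⟨j, hmem j v ⟨hj, hv⟩, hj, hv⟩
  rw [finsum_eq_sum_of_support_subset _ hsupp, ← IsDistribution.biUnion_finset hμ t
    (fun j => (hS.1.pScale j).inter hT)
    fun j k hjk => (hS.pairwise_disjoint hjk).mono inter_subset_left inter_subset_left, ← hT_eq]

lemma IsPInvariant.eq_of_isPScaleFundamentalDomain (hμ : IsDistribution p μ)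
    (hinv : IsPInvariant p μ) {S T : Set (ℚ_[p] × ℚ_[p])} (hS : IsPScaleFundamentalDomain p S)
    (hT : IsPScaleFundamentalDomain p T) : μ S = μ T := by
  have hswap (j : ℤ) : μ (pScale p j T ∩ S) = μ (pScale p (-j) S ∩ T) := by
    rw [← hinv.apply_pScale (-j) ((hT.1.pScale j).inter hS.1), pScale_inter, pScale_pScale,
      neg_add_cancel, pScale_zero, inter_comm]
  calc μ S = ∑ᶠ j : ℤ, μ (pScale p j T ∩ S) := hμ.eq_finsum_inter_pScale hT hS.1
    _ = ∑ᶠ j : ℤ, μ (pScale p (-j) S ∩ T) := finsum_congr hswap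
    _ = ∑ᶠ j : ℤ, μ (pScale p j S ∩ T) :=
        finsum_comp_equiv (Equiv.neg ℤ) (f := fun j => μ (pScale p j S ∩ T))
    _ = μ T := (hμ.eq_finsum_inter_pScale hS hT.1).symm

end Distribution

lemma IsLattice.exists_linearEquiv_eq_preimage_closedBall {p : ℕ} [Fact p.Prime]
    {Λ : Set (ℚ_[p] × ℚ_[p])} (hΛ : IsLattice p Λ) :
    ∃ e : (ℚ_[p] × ℚ_[p]) ≃ₗ[ℚ_[p]] ℚ_[p] × ℚ_[p], Λ = e ⁻¹' closedBall 0 1 := by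
  obtain ⟨b, rfl⟩ := hΛ
  let e := b.equivFun.trans (LinearEquiv.finTwoArrow ℚ_[p] ℚ_[p])
  have he (a c : ℚ_[p]) : e.symm (a, c) = a • b 0 + c • b 1 := by
    simp [e, Module.Basis.equivFun_symm_apply, Fin.sum_univ_two]
  refine ⟨e, ext fun z => ?_⟩
  simp only [mem_ofPred_eq, mem_preimage, mem_closedBall_zero_iff, Prod.norm_def, max_le_iff]
  constructor
  · rintro ⟨a, c, ha, hc, rfl⟩
    rw [← he, e.apply_symm_apply]
    exact ⟨ha, hc⟩
  · intro h
    exact ⟨(e z).1, (e z).2, h.1, h.2, by rw [← he, Prod.mk.eta, e.symm_apply_apply]⟩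

/-- For a `p`-invariant `A`-valued distribution `μ` on `X` and any `ℤ_p`-lattice `Λ`
with set of primitive vectors `Λ' = Λ \ pΛ`, one has `μ(Λ') = μ(X₀)`. -/
theorem stmt2 (p : ℕ) [Fact p.Prime] {A : Type*} [AddCommGroup A]
    (μ : Set (ℚ_[p] × ℚ_[p]) → A) (hμ : IsDistribution p μ) (hinv : IsPInvariant p μ)
    (Λ : Set (ℚ_[p] × ℚ_[p])) (hΛ : IsLattice p Λ) :
    μ (Λ \ pScale p 1 Λ) = μ (X0 p) := by
  obtain ⟨e, rfl⟩ := hΛ.exists_linearEquiv_eq_preimage_closedBall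
  rw [← preimage_pScale, ← preimage_sdiff, closedBall_diff_pScale_one, X0_eq_sphere]
  exact hinv.eq_of_isPScaleFundamentalDomain hμ
    (isPScaleFundamentalDomain_sphere.preimage_linearEquiv e) isPScaleFundamentalDomain_sphere
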